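/- Let (ξ_i, Y_i), i ≥ 1, be i.i.d. random vectors with ξ_1 > 0 and E[ξ_1] < ∞. Let T_n = ξ_1 + ... + ξ_n and N(t) = max{n : T_n ≤ t}. Then the family of random variables {Y_{N(t)+1} : t ≥ 0} is tight (stochastically bounded). -/

import Mathlib

open MeasureTheory ProbabilityTheory Filter Set Topology
open scoped ENNReal NNReal

noncomputable section

variable {Ω : Type*} [MeasurableSpace Ω]

/-- The renewal times `T n = ξ 1 + ⋯ + ξ n` (here `ξ i` in Lean is `ξ_{i+1}` in math). -/
def rT (ξ : ℕ → Ω → ℝ) (n : ℕ) (ω : Ω) : ℝ := ∑ i ∈ Finset.range n, ξ i ω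

/-- `N(t) = max {n : T n ≤ t}`. -/
def rN (ξ : ℕ → Ω → ℝ) (t : ℝ) (ω : Ω) : ℕ := sSup {n : ℕ | rT ξ n ω ≤ t}

/-- The `n`-th regenerative increment `ζ_{n+1} = (ξ_{n+1}, (Z(t + T_n) - Z(T_n))_{0 ≤ t ≤ ξ_{n+1}})`,
the path being stopped at `ξ_{n+1}`. -/
def rIncr (ξ : ℕ → Ω → ℝ) (Z : ℝ → Ω → ℝ) (n : ℕ) (ω : Ω) : ℝ × (ℝ → ℝ) :=
  (ξ n ω, fun s => Z (min (max s 0) (ξ n ω) + rT ξ n ω) ω - Z (rT ξ n ω) ω)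

/-- `M_{n+1} = sup_{T_n ≤ s ≤ T_{n+1}} |Z(s) - Z(T_n)|`, as an extended real. -/
def rM (ξ : ℕ → Ω → ℝ) (Z : ℝ → Ω → ℝ) (n : ℕ) (ω : Ω) : ℝ≥0∞ :=
  ⨆ s ∈ Set.Icc (rT ξ n ω) (rT ξ (n + 1) ω), ENNReal.ofReal |Z s ω - Z (rT ξ n ω) ω|

/-- `Z` is a càdlàg process with `Z(0) = 0` having regenerative increments over the
renewal times `T n` built from the positive interarrival times `ξ`. -/
def RegenIncrements (μ : Measure Ω) (ξ : ℕ → Ω → ℝ) (Z : ℝ → Ω → ℝ) : Prop :=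
  (∀ n ω, 0 < ξ n ω) ∧
  (∀ ω, Z 0 ω = 0) ∧
  (∀ ω t, ContinuousWithinAt (fun s => Z s ω) (Set.Ici t) t) ∧
  (∀ ω t, 0 < t → ∃ l : ℝ, Filter.Tendsto (fun s => Z s ω) (nhdsWithin t (Set.Iio t)) (nhds l)) ∧
  iIndepFun (rIncr ξ Z) μ ∧
  (∀ n, IdentDistrib (rIncr ξ Z n) (rIncr ξ Z 0) μ μ)

/-!
The pair `(ξ, Y)` of the renewal interval straddling `t` is dominated in law by a size-biased
copy of the law `ν` of `(ξ 0, Y 0)`. If `T n ∈ (t - k - 1, t - k]` straddles `t` then `ξ n > k`;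
`T n` is independent of `(ξ n, Y n)`; and a unit window contains on average at most
`2 / E[min ξ 1]` renewal times. Summing over `n` and `k` gives, uniformly in `t`,
`E[min ξ 1] · P((ξ, Y)_{N(t)+1} ∈ S) ≤ 2 ∫_S (x + 1) dν(x, y)`, and since `ξ` is integrable the
right side is small when `S` is the complement of a large ball.
-/

set_option linter.unusedSectionVars false

lemma rT_zero (ξ : ℕ → Ω → ℝ) (ω : Ω) : rT ξ 0 ω = 0 := Finset.sum_range_zero _

lemma rT_succ (ξ : ℕ → Ω → ℝ) (n : ℕ) (ω : Ω) :
    rT ξ (n + 1) ω = rT ξ n ω + ξ n ω := Finset.sum_range_succ _ _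

section RenewalTimes

variable {ξ : ℕ → Ω → ℝ} {ω : Ω}

lemma rT_mono (hξ : ∀ n, 0 ≤ ξ n ω) : Monotone (rT ξ · ω) :=
  monotone_nat_of_le_succ fun n => by rw [rT_succ]; linarith [hξ n]

lemma rT_nonneg (hξ : ∀ n, 0 ≤ ξ n ω) (n : ℕ) : 0 ≤ rT ξ n ω :=
  rT_zero ξ ω ▸ rT_mono hξ n.zero_le

lemma rT_sub_rT {k j : ℕ} (hkj : k ≤ j) :
    rT ξ j ω - rT ξ k ω = ∑ i ∈ Finset.Ico k j, ξ i ω :=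
  (Finset.sum_Ico_eq_sub _ hkj).symm

lemma rT_rN_le_and_lt_rT_rN_succ (hξ : ∀ n, 0 ≤ ξ n ω) {t : ℝ} (ht : 0 ≤ t)
    (h : ∃ n, t < rT ξ n ω) :
    rT ξ (rN ξ t ω) ω ≤ t ∧ t < rT ξ (rN ξ t ω + 1) ω := by
  obtain ⟨n₀, hn₀⟩ := h
  have hbdd : BddAbove {n | rT ξ n ω ≤ t} :=
    ⟨n₀, fun k hk => by_contra fun hkn => (rT_mono hξ (le_of_not_ge hkn)).not_gt (hk.trans_lt hn₀)⟩
  have hne : {n | rT ξ n ω ≤ t}.Nonempty := ⟨0, by simpa [rT_zero] using ht⟩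
  refine ⟨Nat.sSup_mem hne hbdd, not_le.1 fun hsucc => ?_⟩
  exact (le_csSup hbdd hsucc).not_gt (Nat.lt_succ_self _)

/-- All but the last index `i ∈ S` contribute at most `b - a` in total, the last one at most `1`. -/
lemma sum_ofReal_min_one_le_of_rT_mem_Ioc (hξ : ∀ n, 0 ≤ ξ n ω) {a b : ℝ} {S : Finset ℕ}
    (hS : ∀ i ∈ S, rT ξ i ω ∈ Ioc a b) :
    ∑ i ∈ S, ENNReal.ofReal (min (ξ i ω) 1) ≤ ENNReal.ofReal (b - a + 1) := by
  rcases S.eq_empty_or_nonempty with rfl | hne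
  · simp
  rw [← ENNReal.ofReal_sum_of_nonneg fun i _ => le_min (hξ i) zero_le_one]
  refine ENNReal.ofReal_le_ofReal ?_
  set j := S.max' hne
  have hk : S.erase j ⊆ Finset.Ico (S.min' hne) j := fun i hi => by
    obtain ⟨hij, hiS⟩ := Finset.mem_erase.1 hi
    exact Finset.mem_Ico.2 ⟨S.min'_le i hiS, lt_of_le_of_ne (S.le_max' i hiS) hij⟩
  have hfirst := hS _ (S.min'_mem hne)
  have hlast := hS _ (S.max'_mem hne)
  calc ∑ i ∈ S, min (ξ i ω) 1
      = ∑ i ∈ S.erase j, min (ξ i ω) 1 + min (ξ j ω) 1 :=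
        (Finset.sum_erase_add _ _ (S.max'_mem hne)).symm
    _ ≤ ∑ i ∈ Finset.Ico (S.min' hne) j, ξ i ω + 1 := by
        gcongr
        · exact (Finset.sum_le_sum fun i _ => min_le_left _ _).trans
            (Finset.sum_le_sum_of_subset_of_nonneg hk fun i _ _ => hξ i)
        · exact min_le_right _ _
    _ = rT ξ j ω - rT ξ (S.min' hne) ω + 1 := by rw [rT_sub_rT (S.min'_le_max' hne)]
    _ ≤ b - a + 1 := by linarith [hfirst.1, hlast.2]

end RenewalTimes

lemma aemeasurable_rT {μ : Measure Ω} {ξ : ℕ → Ω → ℝ} (hξ : ∀ n, AEMeasurable (ξ n) μ) (n : ℕ) :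
    AEMeasurable (rT ξ n) μ := by
  have h : rT ξ n = ∑ i ∈ Finset.range n, ξ i := by ext ω; simp [rT]
  exact h ▸ Finset.aemeasurable_sum _ fun i _ => hξ i

lemma lintegral_ofReal_min_one_ne_zero {μ : Measure Ω} [NeZero μ] {X : Ω → ℝ}
    (hX : AEMeasurable X μ) (hpos : ∀ ω, 0 < X ω) :
    ∫⁻ ω, ENNReal.ofReal (min (X ω) 1) ∂μ ≠ 0 := fun h => by
  obtain ⟨ω, hω⟩ := ((lintegral_eq_zero_iff' (by fun_prop)).1 h).exists
  exact (ENNReal.ofReal_pos.2 (lt_min (hpos ω) one_pos)).ne' hω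

lemma lintegral_ofReal_min_one_ne_top {μ : Measure Ω} [IsFiniteMeasure μ] (X : Ω → ℝ) :
    ∫⁻ ω, ENNReal.ofReal (min (X ω) 1) ∂μ ≠ ∞ :=
  ne_top_of_le_ne_top (measure_ne_top μ univ) <|
    (lintegral_mono fun _ => ENNReal.ofReal_le_one.2 (min_le_right _ _)).trans_eq lintegral_one

section RenewalMeasure

variable {μ : Measure Ω} [IsProbabilityMeasure μ] {ξ : ℕ → Ω → ℝ}

/-- Integrate `sum_ofReal_min_one_le_of_rT_mem_Ioc`: by independence,
`E[min (ξ n) 1; T n ∈ (a, b]] = E[min ξ 1] · P(T n ∈ (a, b])`. -/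
theorem lintegral_min_one_mul_tsum_measure_rT_mem_Ioc_le (hξ : ∀ n ω, 0 ≤ ξ n ω)
    (hindep : ∀ n, IndepFun (rT ξ n) (ξ n) μ) (hident : ∀ n, IdentDistrib (ξ n) (ξ 0) μ μ)
    (a b : ℝ) :
    (∫⁻ ω, ENNReal.ofReal (min (ξ 0 ω) 1) ∂μ) * ∑' n, μ (rT ξ n ⁻¹' Ioc a b) ≤
      ENNReal.ofReal (b - a + 1) := by
  set f : ℝ → ℝ≥0∞ := fun x => ENNReal.ofReal (min x 1)
  have hf : Measurable f := by fun_prop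
  have hg : Measurable ((Ioc a b).indicator (1 : ℝ → ℝ≥0∞)) :=
    measurable_one.indicator measurableSet_Ioc
  have hT := aemeasurable_rT (fun n => (hident n).aemeasurable_fst)
  have hterm : ∀ n, ∫⁻ ω, f (ξ n ω) * (Ioc a b).indicator 1 (rT ξ n ω) ∂μ =
      (∫⁻ ω, f (ξ 0 ω) ∂μ) * μ (rT ξ n ⁻¹' Ioc a b) := by
    intro n
    refine (lintegral_mul_eq_lintegral_mul_lintegral_of_indepFun''
      (hf.comp_aemeasurable (hident n).aemeasurable_fst) (hg.comp_aemeasurable (hT n))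
      ((hindep n).symm.comp hf hg)).trans ?_
    rw [((hident n).comp hf).lintegral_eq]
    congr 1
    exact lintegral_indicator_one₀ ((hT n).nullMeasurable measurableSet_Ioc)
  calc (∫⁻ ω, f (ξ 0 ω) ∂μ) * ∑' n, μ (rT ξ n ⁻¹' Ioc a b)
      = ∑' n, ∫⁻ ω, f (ξ n ω) * (Ioc a b).indicator 1 (rT ξ n ω) ∂μ := by
        rw [← ENNReal.tsum_mul_left]; simp_rw [hterm]
    _ = ∫⁻ ω, ∑' n, f (ξ n ω) * (Ioc a b).indicator 1 (rT ξ n ω) ∂μ :=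
        (lintegral_tsum fun n => (hf.comp_aemeasurable (hident n).aemeasurable_fst).mul
          (hg.comp_aemeasurable (hT n))).symm
    _ ≤ ∫⁻ _, ENNReal.ofReal (b - a + 1) ∂μ := by
        refine lintegral_mono fun ω => ENNReal.tsum_le_of_sum_range_le fun N => ?_
        simp only [indicator_apply, mem_Ioc, Pi.one_apply, mul_ite, mul_one, mul_zero]
        rw [← Finset.sum_filter]
        exact sum_ofReal_min_one_le_of_rT_mem_Ioc (fun n => hξ n ω)
          fun i hi => (Finset.mem_filter.1 hi).2
    _ = ENNReal.ofReal (b - a + 1) := by simp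

theorem measure_forall_rT_le_eq_zero (hξ : ∀ n ω, 0 ≤ ξ n ω)
    (hindep : ∀ n, IndepFun (rT ξ n) (ξ n) μ) (hident : ∀ n, IdentDistrib (ξ n) (ξ 0) μ μ)
    (hq : ∫⁻ ω, ENNReal.ofReal (min (ξ 0 ω) 1) ∂μ ≠ 0) (t : ℝ) :
    μ {ω | ∀ n, rT ξ n ω ≤ t} = 0 := by
  have hsum : ∑' n, μ (rT ξ n ⁻¹' Ioc (-1) t) ≠ ∞ := fun htop => by
    have := lintegral_min_one_mul_tsum_measure_rT_mem_Ioc_le hξ hindep hident (-1) t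
    rw [htop, ENNReal.mul_top hq] at this
    exact ENNReal.ofReal_ne_top (top_le_iff.1 this)
  refine le_antisymm (ge_of_tendsto' (ENNReal.tendsto_atTop_zero_of_tsum_ne_top hsum)
    fun n => measure_mono fun ω hω => ?_) zero_le
  exact ⟨(neg_one_lt_zero).trans_le (rT_nonneg (fun i => hξ i ω) n), hω n⟩

end RenewalMeasure

lemma tsum_ite_natCast_lt_le (x : ℝ) :
    ∑' k : ℕ, (if (k : ℝ) < x then (1 : ℝ≥0∞) else 0) ≤ ENNReal.ofReal (x + 1) := by
  rw [tsum_eq_sum (s := Finset.range ⌈x⌉₊) fun k hk =>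
    if_neg (by simpa [Nat.lt_ceil] using hk)]
  rw [Finset.sum_congr rfl fun k hk => if_pos (Nat.lt_ceil.1 (Finset.mem_range.1 hk))]
  rcases lt_or_ge x 0 with hx | hx
  · simp [Nat.ceil_eq_zero.2 hx.le]
  · simpa [← ENNReal.ofReal_natCast] using
      ENNReal.ofReal_le_ofReal (Nat.ceil_lt_add_one hx).le

lemma tsum_measure_inter_natCast_lt_le {α : Type*} [MeasurableSpace α] (ν : Measure α)
    {f : α → ℝ} (hf : Measurable f) (S : Set α) :
    ∑' k : ℕ, ν (S ∩ {a | (k : ℝ) < f a}) ≤ ∫⁻ a in S, ENNReal.ofReal (f a + 1) ∂ν := by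
  have hlt : ∀ k : ℕ, MeasurableSet {a | (k : ℝ) < f a} :=
    fun k => measurableSet_lt measurable_const hf
  have hk : ∀ k : ℕ, ν (S ∩ {a | (k : ℝ) < f a}) =
      ∫⁻ a in S, {a | (k : ℝ) < f a}.indicator 1 a ∂ν := fun k => by
    rw [lintegral_indicator_one (hlt k), Measure.restrict_apply (hlt k), inter_comm]
  simp_rw [hk]
  rw [← lintegral_tsum fun k => (measurable_one.indicator (hlt k)).aemeasurable]
  refine lintegral_mono fun a => ?_
  simpa [indicator_apply] using tsum_ite_natCast_lt_le (f a)

lemma indepFun_rT_prodMk {E : Type*} [MeasurableSpace E] {μ : Measure Ω} {ξ : ℕ → Ω → ℝ}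
    {Y : ℕ → Ω → E} (hindep : iIndepFun (fun n ω => (ξ n ω, Y n ω)) μ)
    (hmeas : ∀ n, AEMeasurable (fun ω => (ξ n ω, Y n ω)) μ) (n : ℕ) :
    IndepFun (rT ξ n) (fun ω => (ξ n ω, Y n ω)) μ := by
  have hsum : Measurable fun v : Finset.range n → ℝ × E => ∑ i, (v i).1 :=
    Finset.measurable_sum _ fun i _ => (measurable_pi_apply i).fst
  have h := (hindep.indepFun_finset₀ (Finset.range n) {n} (by simp) hmeas).comp hsum
    (measurable_pi_apply (⟨n, Finset.mem_singleton_self n⟩ : ({n} : Finset ℕ)))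
  convert h using 1
  · ext ω
    exact (Finset.sum_coe_sort (Finset.range n) fun i => ξ i ω).symm
  · rfl

lemma setOf_prodMk_rN_mem_subset {E : Type*} {ξ : ℕ → Ω → ℝ} {Y : ℕ → Ω → E}
    (hξ : ∀ n ω, 0 ≤ ξ n ω) {t : ℝ} (ht : 0 ≤ t)
    (S : Set (ℝ × E)) :
    {ω | (ξ (rN ξ t ω) ω, Y (rN ξ t ω) ω) ∈ S} ⊆ {ω | ∀ n, rT ξ n ω ≤ t} ∪
      ⋃ (n : ℕ) (k : ℕ), rT ξ n ⁻¹' Ioc (t - (k + 1)) (t - k) ∩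
        (fun ω => (ξ n ω, Y n ω)) ⁻¹' (S ∩ {p | (k : ℝ) < p.1}) := by
  intro ω hω
  by_cases h : ∀ n, rT ξ n ω ≤ t
  · exact Or.inl h
  push Not at h
  obtain ⟨hle, hlt⟩ := rT_rN_le_and_lt_rT_rN_succ (fun n => hξ n ω) ht h
  rw [rT_succ] at hlt
  have hk := Nat.floor_le (sub_nonneg.2 hle)
  have hk' := Nat.lt_floor_add_one (t - rT ξ (rN ξ t ω) ω)
  refine Or.inr (mem_iUnion₂.2 ⟨rN ξ t ω, ⌊t - rT ξ (rN ξ t ω) ω⌋₊, ⟨?_, ?_⟩, hω, ?_⟩)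
  · linarith
  · linarith
  · show _ < ξ (rN ξ t ω) ω
    linarith

lemma measure_prodMk_rN_mem_le {E : Type*} [MeasurableSpace E] {μ : Measure Ω}
    {ξ : ℕ → Ω → ℝ} {Y : ℕ → Ω → E} (hξ : ∀ n ω, 0 ≤ ξ n ω)
    (hindep : ∀ n, IndepFun (rT ξ n) (fun ω => (ξ n ω, Y n ω)) μ)
    (hident : ∀ n, IdentDistrib (fun ω => (ξ n ω, Y n ω)) (fun ω => (ξ 0 ω, Y 0 ω)) μ μ)
    {S : Set (ℝ × E)} (hS : MeasurableSet S) {t : ℝ} (ht : 0 ≤ t) :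
    μ {ω | (ξ (rN ξ t ω) ω, Y (rN ξ t ω) ω) ∈ S} ≤ μ {ω | ∀ n, rT ξ n ω ≤ t} +
      ∑' (n : ℕ) (k : ℕ), μ (rT ξ n ⁻¹' Ioc (t - (k + 1)) (t - k)) *
        (μ.map fun ω => (ξ 0 ω, Y 0 ω)) (S ∩ {p | (k : ℝ) < p.1}) := by
  refine (measure_mono (setOf_prodMk_rN_mem_subset hξ ht S)).trans
    ((measure_union_le _ _).trans (add_le_add le_rfl ?_))
  refine (measure_iUnion_le _).trans (ENNReal.tsum_le_tsum fun n => ?_)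
  refine (measure_iUnion_le _).trans (ENNReal.tsum_le_tsum fun k => ?_)
  have hSk : MeasurableSet (S ∩ {p : ℝ × E | (k : ℝ) < p.1}) :=
    hS.inter (measurableSet_lt measurable_const measurable_fst)
  rw [(hindep n).measure_inter_preimage_eq_mul _ _ measurableSet_Ioc hSk,
    ← Measure.map_apply_of_aemeasurable (hident n).aemeasurable_fst hSk, (hident n).map_eq]

theorem lintegral_min_one_mul_measure_prodMk_rN_mem_le {E : Type*} [MeasurableSpace E]
    {μ : Measure Ω} [IsProbabilityMeasure μ] {ξ : ℕ → Ω → ℝ} {Y : ℕ → Ω → E}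
    (hξ : ∀ n ω, 0 ≤ ξ n ω) (hindep : iIndepFun (fun n ω => (ξ n ω, Y n ω)) μ)
    (hident : ∀ n, IdentDistrib (fun ω => (ξ n ω, Y n ω)) (fun ω => (ξ 0 ω, Y 0 ω)) μ μ)
    {S : Set (ℝ × E)} (hS : MeasurableSet S) {t : ℝ} (ht : 0 ≤ t) :
    (∫⁻ ω, ENNReal.ofReal (min (ξ 0 ω) 1) ∂μ) * μ {ω | (ξ (rN ξ t ω) ω, Y (rN ξ t ω) ω) ∈ S} ≤
      2 * ∫⁻ p in S, ENNReal.ofReal (p.1 + 1) ∂(μ.map fun ω => (ξ 0 ω, Y 0 ω)) := by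
  set q := ∫⁻ ω, ENNReal.ofReal (min (ξ 0 ω) 1) ∂μ
  set ν := μ.map fun ω => (ξ 0 ω, Y 0 ω)
  have hindep_pair := indepFun_rT_prodMk hindep fun n => (hident n).aemeasurable_fst
  have hindep_ξ n : IndepFun (rT ξ n) (ξ n) μ := (hindep_pair n).comp measurable_id measurable_fst
  have hident_ξ n : IdentDistrib (ξ n) (ξ 0) μ μ := (hident n).comp measurable_fst
  rcases eq_or_ne q 0 with hq | hq
  · simp [hq]
  have hwindow : ∀ k : ℕ, q * ∑' n, μ (rT ξ n ⁻¹' Ioc (t - (k + 1)) (t - k)) ≤ 2 := fun k => by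
    convert lintegral_min_one_mul_tsum_measure_rT_mem_Ioc_le hξ hindep_ξ hident_ξ _ _
    rw [show t - k - (t - (k + 1)) + 1 = (2 : ℝ) by ring, ENNReal.ofReal_ofNat]
  calc q * μ {ω | (ξ (rN ξ t ω) ω, Y (rN ξ t ω) ω) ∈ S}
      ≤ q * (μ {ω | ∀ n, rT ξ n ω ≤ t} + ∑' (n : ℕ) (k : ℕ),
          μ (rT ξ n ⁻¹' Ioc (t - (k + 1)) (t - k)) * ν (S ∩ {p | (k : ℝ) < p.1})) :=
        mul_le_mul_right (measure_prodMk_rN_mem_le hξ hindep_pair hident hS ht) _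
    _ = ∑' k : ℕ, (q * ∑' n, μ (rT ξ n ⁻¹' Ioc (t - (k + 1)) (t - k))) *
          ν (S ∩ {p | (k : ℝ) < p.1}) := by
        rw [measure_forall_rT_le_eq_zero hξ hindep_ξ hident_ξ hq, zero_add, ENNReal.tsum_comm,
          ← ENNReal.tsum_mul_left]
        simp_rw [ENNReal.tsum_mul_right, mul_assoc]
    _ ≤ ∑' k : ℕ, 2 * ν (S ∩ {p | (k : ℝ) < p.1}) :=
        ENNReal.tsum_le_tsum fun k => mul_le_mul_left (hwindow k) _
    _ ≤ 2 * ∫⁻ p in S, ENNReal.ofReal (p.1 + 1) ∂ν := by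
        rw [ENNReal.tsum_mul_left]
        exact mul_le_mul_right (tsum_measure_inter_natCast_lt_le ν measurable_fst S) _

lemma tendsto_setLIntegral_compl_closedBall {α : Type*} [PseudoMetricSpace α] [CompleteSpace α]
    [SecondCountableTopology α] [MeasurableSpace α] [BorelSpace α] (ν : Measure α)
    [IsFiniteMeasure ν] {f : α → ℝ≥0∞} (hf : ∫⁻ a, f a ∂ν ≠ ∞) (x : α) :
    Tendsto (fun r : ℝ => ∫⁻ a in (Metric.closedBall x r)ᶜ, f a ∂ν) atTop (𝓝 0) := by
  have h := tendsto_measure_compl_closedBall_of_isTightMeasureSet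
    (isTightMeasureSet_singleton (μ := ν)) x
  exact tendsto_setLIntegral_zero hf (by simpa [Function.comp_def] using h)

/-- tightness of `{Y_{N(t)+1} : t ≥ 0}` for i.i.d. pairs `(ξ_i, Y_i)` with
`ξ_1 > 0` and `E[ξ_1] < ∞`. (Lean index `n` corresponds to math index `n+1`, so
`Y_{N(t)+1}` is `Y (rN ξ t ω) ω`.) -/
theorem stmt0 (μ : Measure Ω) [IsProbabilityMeasure μ] (ξ Y : ℕ → Ω → ℝ)
    (hpos : ∀ n ω, 0 < ξ n ω)
    (hindep : iIndepFun (fun n ω => (ξ n ω, Y n ω)) μ)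
    (hident : ∀ n, IdentDistrib (fun ω => (ξ n ω, Y n ω)) (fun ω => (ξ 0 ω, Y 0 ω)) μ μ)
    (hint : Integrable (ξ 0) μ) :
    ∀ ε > (0:ℝ), ∃ c > (0:ℝ), ∀ t ≥ (0:ℝ),
      μ {ω | c < |Y (rN ξ t ω) ω|} < ENNReal.ofReal ε := by
  intro ε hε
  set q := ∫⁻ ω, ENNReal.ofReal (min (ξ 0 ω) 1) ∂μ
  set ν := μ.map fun ω => (ξ 0 ω, Y 0 ω)
  have hq : q ≠ 0 := lintegral_ofReal_min_one_ne_zero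
    ((hident 0).comp measurable_fst).aemeasurable_fst (hpos 0)
  have hq_top : q ≠ ∞ := lintegral_ofReal_min_one_ne_top _
  have hfin : ∫⁻ p, ENNReal.ofReal (p.1 + 1) ∂ν ≠ ∞ := by
    rw [lintegral_map' (by fun_prop) (hident 0).aemeasurable_fst]
    exact ((hint.add (integrable_const 1)).lintegral_lt_top).ne
  have htail : Tendsto (fun r : ℝ => 2 * ∫⁻ p in (Metric.closedBall 0 r)ᶜ,
      ENNReal.ofReal (p.1 + 1) ∂ν) atTop (𝓝 0) := by
    simpa using ENNReal.Tendsto.const_mul (tendsto_setLIntegral_compl_closedBall ν hfin 0)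
      (Or.inr ENNReal.ofNat_ne_top)
  obtain ⟨c, hc, hc_pos⟩ := ((htail.eventually (gt_mem_nhds
    (ENNReal.mul_pos hq (ENNReal.ofReal_pos.2 hε).ne'))).and (eventually_gt_atTop 0)).exists
  refine ⟨c, hc_pos, fun t ht => (ENNReal.mul_lt_mul_iff_right hq hq_top).1 ?_⟩
  calc q * μ {ω | c < |Y (rN ξ t ω) ω|}
      ≤ q * μ {ω | (ξ (rN ξ t ω) ω, Y (rN ξ t ω) ω) ∈ (Metric.closedBall 0 c)ᶜ} := by
        refine mul_le_mul_right (measure_mono fun ω hω => ?_) _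
        simp only [mem_compl_iff, Metric.mem_closedBall, dist_zero_right, not_le]
        exact (show c < _ from hω).trans_le (le_max_right _ _)
    _ ≤ 2 * ∫⁻ p in (Metric.closedBall 0 c)ᶜ, ENNReal.ofReal (p.1 + 1) ∂ν :=
        lintegral_min_one_mul_measure_prodMk_rN_mem_le (fun n ω => (hpos n ω).le) hindep hident
          Metric.isClosed_closedBall.measurableSet.compl ht
    _ < q * ENNReal.ofReal ε := hc

end
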